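/- For partition λ ⊢ n into at most d parts and any weight vector v ∈ ℕ^d with Σᵢ vᵢ = n that is lexicographically strictly larger than the weight vector w defined by wᵢ = λᵢ (for i at most the number of parts, 0 otherwise), we have Y_λ V(v) = 0. -/

import Mathlib

open Matrix
open scoped Kronecker ENNReal

noncomputable section

def permOp (d n : ℕ) (π : Equiv.Perm (Fin n)) :
    Matrix (Fin n → Fin d) (Fin n → Fin d) ℂ :=
  Matrix.of fun x y => if y = x ∘ π then 1 else 0

def rowSum (lam : ℕ → ℕ) (r : ℕ) : ℕ := ∑ i ∈ Finset.range r, lam i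

def rowOf (lam : ℕ → ℕ) (j : ℕ) : ℕ :=
  Nat.findGreatest (fun r => rowSum lam r ≤ j) j

def colOf (lam : ℕ → ℕ) (j : ℕ) : ℕ := j - rowSum lam (rowOf lam j)

def rowStab (lam : ℕ → ℕ) (n : ℕ) : Finset (Equiv.Perm (Fin n)) :=
  Finset.univ.filter fun π => ∀ j : Fin n, rowOf lam (π j : ℕ) = rowOf lam (j : ℕ)

def colStab (lam : ℕ → ℕ) (n : ℕ) : Finset (Equiv.Perm (Fin n)) :=
  Finset.univ.filter fun π => ∀ j : Fin n, colOf lam (π j : ℕ) = colOf lam (j : ℕ)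

def colSign (d n : ℕ) (lam : ℕ → ℕ) : Matrix (Fin n → Fin d) (Fin n → Fin d) ℂ :=
  ∑ b ∈ colStab lam n, ((Equiv.Perm.sign b : ℤ) : ℂ) • permOp d n b

def youngSym (d n : ℕ) (lam : ℕ → ℕ) : Matrix (Fin n → Fin d) (Fin n → Fin d) ℂ :=
  (∑ a ∈ rowStab lam n, permOp d n a) * colSign d n lam

def weight (d n : ℕ) (e : Fin n → Fin d) : Fin d → ℕ :=
  fun i => (Finset.univ.filter fun j => e j = i).card

def tpow (d n : ℕ) (U : Matrix (Fin d) (Fin d) ℂ) :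
    Matrix (Fin n → Fin d) (Fin n → Fin d) ℂ :=
  Matrix.of fun x y => ∏ i, U (x i) (y i)


section Aux

lemma rowSum_rowOf_le (lam : ℕ → ℕ) (j : ℕ) : rowSum lam (rowOf lam j) ≤ j :=
  Nat.findGreatest_spec (P := fun r => rowSum lam r ≤ j) (Nat.zero_le j) (by simp [rowSum])

lemma rowSum_add_colOf (lam : ℕ → ℕ) (j : ℕ) :
    rowSum lam (rowOf lam j) + colOf lam j = j := by
  have := rowSum_rowOf_le lam j
  unfold colOf; omega

lemma rowSum_of_ge {lam : ℕ → ℕ} {k : ℕ} (hzero : ∀ i, k ≤ i → lam i = 0)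
    {m : ℕ} (hm : k ≤ m) : rowSum lam m = rowSum lam k := by
  unfold rowSum
  rw [← Finset.sum_range_add_sum_Ico _ hm]
  rw [Finset.sum_eq_zero (fun i hi => hzero i (Finset.mem_Ico.1 hi).1)]
  omega

lemma colOf_lt {lam : ℕ → ℕ} {k n : ℕ}
    (hpos : ∀ i < k, 0 < lam i) (hzero : ∀ i, k ≤ i → lam i = 0)
    (hsum : rowSum lam k = n) {j : ℕ} (hj : j < n) :
    colOf lam j < lam (rowOf lam j) := by
  by_contra h
  push_neg at h
  have hle := rowSum_rowOf_le lam j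
  have hcol := rowSum_add_colOf lam j
  have h1 : rowSum lam (rowOf lam j + 1) ≤ j := by
    have hss : rowSum lam (rowOf lam j + 1) = rowSum lam (rowOf lam j) + lam (rowOf lam j) := by
      simp [rowSum, Finset.sum_range_succ]
    omega
  have hrk : rowOf lam j + 1 ≤ k := by
    by_contra hk
    push_neg at hk
    have := rowSum_of_ge hzero (le_of_lt hk)
    omega
  have hge : rowOf lam j + 1 ≤ rowSum lam (rowOf lam j + 1) := by
    calc rowOf lam j + 1 = ∑ _i ∈ Finset.range (rowOf lam j + 1), 1 := by simp
    _ ≤ rowSum lam (rowOf lam j + 1) := Finset.sum_le_sum fun i hi =>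
        hpos i (lt_of_lt_of_le (Finset.mem_range.1 hi) hrk)
  exact absurd h1
    (Nat.findGreatest_is_greatest (P := fun r => rowSum lam r ≤ j) (Nat.lt_succ_self _) (by omega))

lemma colLen_iff {lam : ℕ → ℕ} {k : ℕ} (hanti : Antitone lam)
    (hzero : ∀ i, k ≤ i → lam i = 0) (c r : ℕ) :
    c < lam r ↔ r < ((Finset.range k).filter (fun r' => c < lam r')).card := by
  set T := (Finset.range k).filter (fun r' => c < lam r') with hT
  constructor
  · intro h
    have hrk : r < k := by
      by_contra hk; push_neg at hk; rw [hzero r hk] at h; omega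
    have hsub : Finset.range (r+1) ⊆ T := by
      intro x hx
      have hx' := Finset.mem_range.1 hx
      exact Finset.mem_filter.2 ⟨Finset.mem_range.2 (by omega),
        lt_of_lt_of_le h (hanti (by omega))⟩
    calc r < r + 1 := Nat.lt_succ_self r
    _ = (Finset.range (r+1)).card := by simp
    _ ≤ T.card := Finset.card_le_card hsub
  · intro h
    by_contra hc
    push_neg at hc
    have hsub : T ⊆ Finset.range r := by
      intro x hx
      obtain ⟨hx1, hx2⟩ := Finset.mem_filter.1 hx
      rw [Finset.mem_range]
      by_contra hxr; push_neg at hxr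
      exact absurd (lt_of_lt_of_le hx2 (hanti hxr)) (by omega)
    have := Finset.card_le_card hsub
    simp at this
    omega

/-- Any `e` of weight `v` lex-bigger than `lam` has two equal values in the same column. -/
lemma exists_pair (d n k : ℕ) (lam : ℕ → ℕ)
    (hanti : Antitone lam) (hpos : ∀ i < k, 0 < lam i) (hzero : ∀ i, k ≤ i → lam i = 0)
    (hsum : rowSum lam k = n)
    (v : Fin d → ℕ)
    (i : Fin d) (hi : lam (i : ℕ) < v i) (hj : ∀ j : Fin d, j < i → v j = lam (j : ℕ))
    (e : Fin n → Fin d)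
    (he : ∀ j : Fin d, (Finset.univ.filter fun p => e p = j).card = v j) :
    ∃ p q : Fin n, p ≠ q ∧ e p = e q ∧ colOf lam (p : ℕ) = colOf lam (q : ℕ) := by
  by_contra hcon
  push_neg at hcon
  set S : Finset (Fin n) := Finset.univ.filter (fun p => (e p : ℕ) ≤ (i : ℕ)) with hS
  set T : Finset (Fin d) := Finset.univ.filter (fun j => (j : ℕ) ≤ (i : ℕ)) with hT
  have hScard : S.card = ∑ j ∈ T, v j := by
    rw [Finset.card_eq_sum_card_fiberwise (f := e) (t := T)
      (fun p hp => Finset.mem_filter.2 ⟨Finset.mem_univ _, (Finset.mem_filter.1 hp).2⟩)]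
    refine Finset.sum_congr rfl fun j hj' => ?_
    rw [← he j]
    congr 1
    ext p
    simp only [hS, Finset.mem_filter, Finset.mem_univ, true_and, and_iff_right_iff_imp]
    intro hpe
    rw [hpe]
    exact (Finset.mem_filter.1 hj').2
  have hTi : i ∈ T := Finset.mem_filter.2 ⟨Finset.mem_univ _, le_refl _⟩
  have hlt : ∑ j ∈ T, lam (j : ℕ) < ∑ j ∈ T, v j := by
    apply Finset.sum_lt_sum
    · intro j hj'
      have hji : (j : ℕ) ≤ (i : ℕ) := (Finset.mem_filter.1 hj').2
      rcases lt_or_eq_of_le hji with h | h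
      · rw [hj j (by exact Fin.lt_def.2 h)]
      · have : j = i := Fin.ext h
        subst this; exact le_of_lt hi
    · exact ⟨i, hTi, hi⟩
  have hTsum : ∑ j ∈ T, lam (j : ℕ) = ∑ r ∈ Finset.range ((i : ℕ) + 1), lam r := by
    apply Finset.sum_nbij' (i := fun (j : Fin d) => (j : ℕ))
      (j := fun r => if h : r < d then (⟨r, h⟩ : Fin d) else i)
    · intro a ha; exact Finset.mem_range.2 (Nat.lt_succ_of_le (Finset.mem_filter.1 ha).2)
    · intro a ha
      have h1 : a ≤ (i : ℕ) := Nat.lt_succ_iff.1 (Finset.mem_range.1 ha)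
      have h2 : a < d := lt_of_le_of_lt h1 i.isLt
      simp only [dif_pos h2]
      exact Finset.mem_filter.2 ⟨Finset.mem_univ _, h1⟩
    · intro a ha; simp [a.isLt]
    · intro a ha
      have h1 : a ≤ (i : ℕ) := Nat.lt_succ_iff.1 (Finset.mem_range.1 ha)
      have h2 : a < d := lt_of_le_of_lt h1 i.isLt
      simp [h2]
    · intro a ha; rfl
  have hcolbound : ∀ p ∈ S, colOf lam (p : ℕ) ∈ Finset.range (lam 0) := by
    intro p _
    refine Finset.mem_range.2 (lt_of_lt_of_le (colOf_lt hpos hzero hsum p.isLt) (hanti (Nat.zero_le _)))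
  have hSfib : S.card = ∑ c ∈ Finset.range (lam 0),
      (S.filter (fun (p : Fin n) => colOf lam (p : ℕ) = c)).card :=
    Finset.card_eq_sum_card_fiberwise hcolbound
  have hfib : ∀ c ∈ Finset.range (lam 0),
      (S.filter (fun (p : Fin n) => colOf lam (p : ℕ) = c)).card ≤
      ((Finset.range ((i : ℕ) + 1)).filter (fun r => c < lam r)).card := by
    intro c _
    set Sc := S.filter (fun (p : Fin n) => colOf lam (p : ℕ) = c) with hSc
    set m := ((Finset.range k).filter (fun r' => c < lam r')).card with hm
    have hrange : ((Finset.range ((i : ℕ) + 1)).filter (fun r => c < lam r)) =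
        Finset.range (min ((i : ℕ) + 1) m) := by
      ext r
      simp only [Finset.mem_filter, Finset.mem_range, colLen_iff hanti hzero c r, ← hm,
        lt_min_iff]
    rw [hrange, Finset.card_range]
    apply le_min
    · have : Sc.card ≤ (Finset.range ((i:ℕ)+1)).card := by
        apply Finset.card_le_card_of_injOn (fun p => (e p : ℕ))
        · intro p hp
          have := (Finset.mem_filter.1 ((Finset.mem_filter.1 hp).1)).2
          exact Finset.mem_range.2 (Nat.lt_succ_of_le this)
        · intro p hp q hq hpq
          by_contra hne
          have hep : e p = e q := Fin.ext hpq
          have hcp := (Finset.mem_filter.1 hp).2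
          have hcq := (Finset.mem_filter.1 hq).2
          exact hcon p q hne hep (by rw [hcp, hcq])
      simpa using this
    · have : Sc.card ≤ ((Finset.range k).filter (fun r' => c < lam r')).card := by
        apply Finset.card_le_card_of_injOn (fun (p : Fin n) => rowOf lam (p : ℕ))
        · intro p hp
          have hcp := (Finset.mem_filter.1 hp).2
          have h1 := colOf_lt hpos hzero hsum p.isLt
          rw [hcp] at h1
          refine Finset.mem_filter.2 ⟨Finset.mem_range.2 ?_, h1⟩
          by_contra hk'; push_neg at hk'
          rw [hzero _ hk'] at h1; omega
        · intro p hp q hq hpq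
          replace hpq : rowOf lam (p : ℕ) = rowOf lam (q : ℕ) := hpq
          simp only [Finset.mem_coe, hSc, Finset.mem_filter] at hp hq
          have hcp := hp.2
          have hcq := hq.2
          have h1 := rowSum_add_colOf lam (p : ℕ)
          have h2 := rowSum_add_colOf lam (q : ℕ)
          rw [hpq] at h1
          apply Fin.ext
          omega
      omega
  have hdc : ∑ c ∈ Finset.range (lam 0),
      ((Finset.range ((i : ℕ) + 1)).filter (fun r => c < lam r)).card =
      ∑ r ∈ Finset.range ((i : ℕ) + 1), lam r := by
    have : ∀ c, ((Finset.range ((i : ℕ) + 1)).filter (fun r => c < lam r)).card =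
        ∑ r ∈ Finset.range ((i : ℕ) + 1), if c < lam r then 1 else 0 :=
      fun c => Finset.card_filter _ _
    simp_rw [this]
    rw [Finset.sum_comm]
    refine Finset.sum_congr rfl fun r _ => ?_
    have hl : lam r ≤ lam 0 := hanti (Nat.zero_le r)
    have : ∑ c ∈ Finset.range (lam 0), (if c < lam r then 1 else 0) =
        ∑ c ∈ Finset.range (lam 0), (if c ∈ Finset.range (lam r) then 1 else 0) := by
      refine Finset.sum_congr rfl fun c _ => by simp [Finset.mem_range]
    rw [this, Finset.sum_ite_mem, Finset.inter_eq_right.2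
      (Finset.range_subset_range.2 hl)]
    simp
  have : S.card ≤ ∑ r ∈ Finset.range ((i : ℕ) + 1), lam r := by
    rw [hSfib, ← hdc]
    exact Finset.sum_le_sum hfib
  omega

lemma sum_mulVec' {I X : Type*} [Fintype X] (s : Finset I)
    (M : I → Matrix X X ℂ) (x : X → ℂ) :
    (∑ b ∈ s, M b).mulVec x = ∑ b ∈ s, (M b).mulVec x := by
  ext y
  simp only [Matrix.mulVec, dotProduct, Finset.sum_apply, Matrix.sum_apply,
    Finset.sum_mul]
  exact Finset.sum_comm

lemma permOp_mulVec_single (d n : ℕ) (π : Equiv.Perm (Fin n)) (e : Fin n → Fin d) :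
    (permOp d n π).mulVec (Pi.single e 1) = Pi.single (e ∘ ⇑π⁻¹) 1 := by
  ext x
  rw [Matrix.mulVec_single]
  simp only [permOp, Matrix.of_apply, Pi.single_apply, mul_one, Matrix.col_apply,
    Pi.smul_apply, MulOpposite.op_one, one_smul]
  congr 1
  apply propext
  constructor
  · rintro rfl; funext j; simp
  · rintro rfl; funext j; simp

lemma youngSym_mulVec_single_eq_zero (d n : ℕ) (lam : ℕ → ℕ) (e : Fin n → Fin d)
    (p q : Fin n) (hpq : p ≠ q) (hepq : e p = e q)
    (hcol : colOf lam (p : ℕ) = colOf lam (q : ℕ)) :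
    (youngSym d n lam).mulVec (Pi.single e 1) = 0 := by
  unfold youngSym
  rw [← Matrix.mulVec_mulVec]
  suffices h : (colSign d n lam).mulVec (Pi.single e 1) = 0 by
    rw [h, Matrix.mulVec_zero]
  unfold colSign
  rw [sum_mulVec']
  set t := Equiv.swap p q with ht
  have htcol : ∀ j : Fin n, colOf lam (t j : ℕ) = colOf lam (j : ℕ) := by
    intro j
    by_cases h1 : j = p
    · subst h1; rw [ht, Equiv.swap_apply_left]; exact hcol.symm
    by_cases h2 : j = q
    · subst h2; rw [ht, Equiv.swap_apply_right]; exact hcol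
    · rw [ht, Equiv.swap_apply_of_ne_of_ne h1 h2]
  have het : e ∘ ⇑t = e := by
    funext j
    by_cases h1 : j = p
    · subst h1; simp [ht, Equiv.swap_apply_left, hepq.symm]
    by_cases h2 : j = q
    · subst h2; simp [ht, Equiv.swap_apply_right, hepq]
    · simp [ht, Equiv.swap_apply_of_ne_of_ne h1 h2]
  apply Finset.sum_involution (g := fun b _ => b * t)
  · intro b hb
    rw [Matrix.smul_mulVec, Matrix.smul_mulVec,
      permOp_mulVec_single, permOp_mulVec_single]
    have h1 : e ∘ ⇑(b * t)⁻¹ = e ∘ ⇑b⁻¹ := by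
      funext x
      simp only [_root_.mul_inv_rev, Equiv.Perm.coe_mul, Function.comp_apply]
      have : t⁻¹ = t := by rw [ht]; exact Equiv.swap_inv p q
      rw [this]
      exact congrFun het (b⁻¹ x)
    rw [h1]
    have h2 : ((Equiv.Perm.sign (b * t) : ℤ) : ℂ) = -((Equiv.Perm.sign b : ℤ) : ℂ) := by
      rw [_root_.map_mul, ht, Equiv.Perm.sign_swap hpq]
      push_cast
      ring
    rw [h2, neg_smul, add_neg_cancel]
  · intro b _ _
    intro hcon
    have ht1 : t = 1 := by
      have h' : b * t = b * 1 := by rw [mul_one]; exact hcon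
      exact mul_left_cancel h'
    have hp : t p = p := by rw [ht1]; rfl
    rw [ht, Equiv.swap_apply_left] at hp
    exact hpq hp.symm
  · intro b hb
    simp only [colStab, Finset.mem_filter, Finset.mem_univ, true_and] at hb ⊢
    intro j
    rw [Equiv.Perm.mul_apply, hb (t j), htcol j]
  · intro b _
    rw [mul_assoc, ht, Equiv.swap_mul_self, mul_one]

end Aux

/-- If `v` is a weight vector summing to `n` that is lexicographically strictly larger than
the weight vector `w` given by the partition `lam` itself, then the Young symmetrizer
annihilates the whole weight subspace `V(v)`. -/
theorem youngSym_weightSpace_eq_bot_of_lex_gt (d n k : ℕ) (hkd : k ≤ d) (lam : ℕ → ℕ)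
    (hanti : Antitone lam) (hpos : ∀ i < k, 0 < lam i) (hzero : ∀ i, k ≤ i → lam i = 0)
    (hsum : rowSum lam k = n)
    (w : Fin d → ℕ) (hw : ∀ i : Fin d, w i = lam (i : ℕ))
    (v : Fin d → ℕ) (hv : ∑ i, v i = n)
    (hlex : ∃ i : Fin d, w i < v i ∧ ∀ j : Fin d, j < i → v j = w j) :
    Submodule.map (youngSym d n lam).mulVecLin
      (Submodule.span ℂ {x : (Fin n → Fin d) → ℂ |
        ∃ e : Fin n → Fin d, weight d n e = v ∧ x = Pi.single e 1}) = ⊥ := by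
  rw [Submodule.map_span, Submodule.span_eq_bot]
  rintro x ⟨y, ⟨e, hwe, rfl⟩, rfl⟩
  rw [Matrix.mulVecLin_apply]
  obtain ⟨i, hwi, hji⟩ := hlex
  obtain ⟨p, q, hpq, hepq, hcol⟩ := exists_pair d n k lam hanti hpos hzero hsum v i
    (by rw [← hw i]; exact hwi)
    (fun j hj' => by rw [hji j hj', hw j])
    e (fun j => congrFun hwe j)
  exact youngSym_mulVec_single_eq_zero d n lam e p q hpq hepq hcol
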